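/- Let G=(V,E) be a countably infinite, connected, locally finite simple graph whose vertex-isoperimetric profile ∂_V : ℕ → ℕ is non-decreasing. Suppose v₁,v₂,… is a bijective enumeration of V such that, for some integer c ≥ 1 and all N ∈ ℕ, every vertex u with min_{1≤i≤N} d(u,v_i) ≤ 1 (graph distance) belongs to {v₁,…,v_{N+c·∂_V(N)}}. Then for every finitely supported f : V → ℝ_{≥0}, the rearrangement f* associated to this enumeration satisfies ‖∇f*‖_{L^∞} ≤ c·‖∇f‖_{L^∞}. -/

import Mathlib

open Real

/-- The edge boundary of a set `A`: the edges of `G` with exactly one endpoint in `A`. -/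
def edgeBoundary {V : Type*} (G : SimpleGraph V) (A : Set V) : Set (Sym2 V) :=
  {e | e ∈ G.edgeSet ∧ ∃ u w : V, e = s(u, w) ∧ u ∈ A ∧ w ∉ A}

/-- The vertex boundary of `A`: vertices outside `A` adjacent to some vertex of `A`. -/
def vertexBoundary {V : Type*} (G : SimpleGraph V) (A : Set V) : Set V :=
  {u | u ∉ A ∧ ∃ w ∈ A, G.Adj u w}

/-- The vertex-isoperimetric profile `∂_V(N)`. -/
noncomputable def vertexProfile {V : Type*} (G : SimpleGraph V) (N : ℕ) : ℕ :=
  sInf {k : ℕ | ∃ A : Set V, A.Finite ∧ A.ncard = N ∧ (vertexBoundary G A).ncard = k}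

/-- `‖∇f‖_{L¹} = ∑_{{u,w} ∈ E} |f u - f w|`. -/
noncomputable def gradL1 {V : Type*} (G : SimpleGraph V) (f : V → ℝ) : ℝ :=
  ∑' e : G.edgeSet,
    Sym2.lift ⟨fun u w => |f u - f w|, fun u w => by dsimp only; rw [abs_sub_comm]⟩ e.1

/-- `‖∇f‖_{L^∞} = sup_{{u,w} ∈ E} |f u - f w|`. -/
noncomputable def gradLinf {V : Type*} (G : SimpleGraph V) (f : V → ℝ) : ℝ :=
  ⨆ e : G.edgeSet,
    Sym2.lift ⟨fun u w => |f u - f w|, fun u w => by dsimp only; rw [abs_sub_comm]⟩ e.1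

/-- `‖∇f‖_{L^p} = (∑_{{u,w} ∈ E} |f u - f w|^p)^(1/p)` for real `p`. -/
noncomputable def gradLp {V : Type*} (G : SimpleGraph V) (f : V → ℝ) (p : ℝ) : ℝ :=
  (∑' e : G.edgeSet,
    Sym2.lift ⟨fun u w => |f u - f w| ^ p,
      fun u w => by dsimp only; rw [abs_sub_comm]⟩ e.1) ^ (1 / p)

/-- `‖∇f‖_{L²} = (∑_{{u,w} ∈ E} |f u - f w|²)^(1/2)`. -/
noncomputable def gradL2 {V : Type*} (G : SimpleGraph V) (f : V → ℝ) : ℝ :=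
  Real.sqrt (∑' e : G.edgeSet,
    Sym2.lift ⟨fun u w => |f u - f w| ^ 2,
      fun u w => by dsimp only; rw [abs_sub_comm]⟩ e.1)

/-- `g` is the rearrangement of `f` along the enumeration `v` (with `v 0 = v₁`):
`g` is obtained from `f` by permuting its values, and the values of `g` are
non-increasing along the enumeration. -/
def IsRearrangement {V : Type*} (v : ℕ → V) (f g : V → ℝ) : Prop :=
  (∃ σ : Equiv.Perm V, g = f ∘ σ) ∧ ∀ m n : ℕ, m ≤ n → g (v n) ≤ g (v m)

/-- The grid graph `(ℤ², ℓ¹)`. -/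
def gridGraph : SimpleGraph (ℤ × ℤ) where
  Adj p q := |p.1 - q.1| + |p.2 - q.2| = 1
  symm := by
    constructor
    intro p q h
    rw [abs_sub_comm q.1 p.1, abs_sub_comm q.2 p.2]
    exact h
  loopless := by constructor; intro p h; simp at h

/-- One step of the counterclockwise square spiral on `ℤ²`. -/
def spiralNext : ℤ × ℤ → ℤ × ℤ := fun p =>
  if 1 ≤ p.1 ∧ p.2 = -p.1 then (p.1 + 1, p.2)
  else if 1 ≤ p.1 ∧ -p.1 ≤ p.2 ∧ p.2 < p.1 then (p.1, p.2 + 1)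
  else if 1 ≤ p.2 ∧ -p.2 < p.1 ∧ p.1 ≤ p.2 then (p.1 - 1, p.2)
  else if p.1 ≤ -1 ∧ p.1 < p.2 ∧ p.2 ≤ -p.1 then (p.1, p.2 - 1)
  else (p.1 + 1, p.2)

/-- The spiral enumeration of `ℤ²`, 0-indexed: `spiral 0 = v₁ = (0,0)`,
`spiral 1 = v₂ = (1,0)`, `spiral 2 = v₃ = (1,1)`, `spiral 3 = v₄ = (0,1)`, … -/
def spiral (n : ℕ) : ℤ × ℤ := spiralNext^[n] (0, 0)

/-! The top `N` values of `f` sit on a set `A` of `N` vertices. Along an edge `f` drops by at most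
`M = ‖∇f‖_{L^∞}`, so `f ≥ f*(v_N) - M` on `A ∪ ∂_V A`, a set of at least `N + ∂_V(N)` vertices;
hence `f*` drops by at most `M` over the next `∂_V(N)` steps of the enumeration. Since `∂_V` is
non-decreasing, `c` such drops cover the range `N + c·∂_V(N)` in which, by hypothesis, every
neighbour of `v_N` is enumerated. -/

open Function Set

section GradLinf

variable {V : Type*} (G : SimpleGraph V)

lemma gradLinf_nonneg (f : V → ℝ) : 0 ≤ gradLinf G f :=
  Real.iSup_nonneg fun e => by
    induction e.1 using Sym2.ind
    exact abs_nonneg _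

lemma abs_sub_le_gradLinf {f : V → ℝ} (hf : BddAbove (range fun x => |f x|)) {x y : V}
    (hxy : G.Adj x y) : |f x - f y| ≤ gradLinf G f := by
  obtain ⟨B, hB⟩ := hf
  refine le_ciSup (f := fun e : G.edgeSet => Sym2.lift ⟨fun u w => |f u - f w|,
    fun u w => by dsimp only; rw [abs_sub_comm]⟩ e.1) ⟨B + B, ?_⟩ ⟨s(x, y), hxy⟩
  rintro _ ⟨⟨e, he⟩, rfl⟩
  induction e using Sym2.ind with
  | _ u w => exact (abs_sub _ _).trans (add_le_add (hB ⟨u, rfl⟩) (hB ⟨w, rfl⟩))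

lemma gradLinf_le_of_forall_adj {f : V → ℝ} {K : ℝ} (hK : 0 ≤ K)
    (h : ∀ x y, G.Adj x y → |f x - f y| ≤ K) : gradLinf G f ≤ K :=
  Real.iSup_le (fun e => by
    obtain ⟨e, he⟩ := e
    induction e using Sym2.ind with
    | _ x y => exact h x y he) hK

end GradLinf

section VertexBoundary

variable {V : Type*} (G : SimpleGraph V) {A : Set V}

lemma vertexProfile_ncard_le (hA : A.Finite) :
    vertexProfile G A.ncard ≤ (vertexBoundary G A).ncard :=
  Nat.sInf_le ⟨A, hA, rfl, rfl⟩

lemma disjoint_vertexBoundary (A : Set V) : Disjoint A (vertexBoundary G A) :=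
  Set.disjoint_left.2 fun _ hx hb => hb.1 hx

lemma ncard_add_vertexProfile_le_encard_union (hA : A.Finite) :
    ((A.ncard + vertexProfile G A.ncard : ℕ) : ℕ∞) ≤ (A ∪ vertexBoundary G A).encard := by
  rw [encard_union_eq (disjoint_vertexBoundary G A), ← hA.cast_ncard_eq, Nat.cast_add]
  gcongr
  exact (Nat.cast_le.2 (vertexProfile_ncard_le G hA)).trans (ncard_le_encard _)

end VertexBoundary

lemma Antitone.sub_mul_le_apply_add_mul {g : ℕ → ℝ} (hg : Antitone g) {p : ℕ → ℕ}
    (hp : Monotone p) {M : ℝ} (hstep : ∀ i, g i - M ≤ g (i + p i)) (m j : ℕ) :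
    g m - j * M ≤ g (m + j * p m) := by
  induction j with
  | zero => simp
  | succ j ih =>
    calc g m - ↑(j + 1) * M = g m - j * M - M := by push_cast; ring
      _ ≤ g (m + j * p m) - M := by linarith
      _ ≤ g (m + j * p m + p (m + j * p m)) := hstep _
      _ ≤ g (m + (j + 1) * p m) := hg (by nlinarith [hp (Nat.le_add_right m (j * p m))])

namespace IsRearrangement

variable {V : Type*} {v : ℕ → V} {f g : V → ℝ}

lemma antitone (hre : IsRearrangement v f g) : Antitone (g ∘ v) :=
  fun m n h => hre.2 m n h

lemma exists_ncard_eq_forall_le (hre : IsRearrangement v f g) (hv : v.Injective) (i : ℕ) :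
    ∃ A : Set V, A.Finite ∧ A.ncard = i + 1 ∧ ∀ x ∈ A, g (v i) ≤ f x := by
  have hanti := hre.antitone
  obtain ⟨⟨σ, rfl⟩, -⟩ := hre
  refine ⟨σ ∘ v '' Iio (i + 1), (finite_Iio _).image _, ?_, ?_⟩
  · rw [ncard_image_of_injective _ (σ.injective.comp hv), ncard_Iio_nat]
  · rintro _ ⟨j, hj, rfl⟩
    exact hanti (Nat.lt_succ_iff.1 hj)

lemma le_apply_of_lt_encard (hre : IsRearrangement v f g) (hv : v.Bijective) {T : Set V}
    {t : ℝ} {k : ℕ} (hT : ∀ x ∈ T, t ≤ f x) (hk : (k : ℕ∞) < T.encard) : t ≤ g (v k) := by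
  have hanti := hre.antitone
  obtain ⟨⟨σ, rfl⟩, -⟩ := hre
  by_contra! hlt
  have hsub : (σ ∘ v) ⁻¹' T ⊆ Iio k := fun n hn => by
    by_contra! hkn
    exact (hanti (not_lt.1 hkn)).not_gt (hlt.trans_le (hT _ hn))
  have hcard := encard_le_encard hsub
  rw [encard_preimage_of_bijective (σ.bijective.comp hv)] at hcard
  exact hk.not_ge (hcard.trans_eq (Nat.encard_range k))

variable (G : SimpleGraph V) {M : ℝ}

lemma sub_le_apply_add_vertexProfile (hre : IsRearrangement v f g) (hv : v.Bijective)
    (hM0 : 0 ≤ M) (hM : ∀ x y, G.Adj x y → |f x - f y| ≤ M) (i : ℕ) :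
    g (v i) - M ≤ g (v (i + vertexProfile G (i + 1))) := by
  obtain ⟨A, hAfin, hAcard, hA⟩ := hre.exists_ncard_eq_forall_le hv.1 i
  refine hre.le_apply_of_lt_encard hv (T := A ∪ vertexBoundary G A) ?_ ?_
  · rintro x (hx | ⟨-, w, hw, hxw⟩)
    · linarith [hA x hx]
    · linarith [hA w hw, (abs_sub_le_iff.1 (hM w x hxw.symm)).1]
  · refine lt_of_lt_of_le ?_ (ncard_add_vertexProfile_le_encard_union G hAfin)
    rw [hAcard]
    exact_mod_cast (by omega : i + vertexProfile G (i + 1) < i + 1 + vertexProfile G (i + 1))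

lemma sub_le_of_adj {c : ℕ} (hre : IsRearrangement v f g) (hv : v.Bijective)
    (hmono : Monotone (vertexProfile G))
    (hnbr : ∀ N : ℕ, ∀ u : V, (∃ i < N, G.dist u (v i) ≤ 1) →
      u ∈ v '' Iio (N + c * vertexProfile G N))
    (hM0 : 0 ≤ M) (hM : ∀ x y, G.Adj x y → |f x - f y| ≤ M) {m n : ℕ}
    (hmn : G.Adj (v m) (v n)) : g (v m) - g (v n) ≤ c * M := by
  set p : ℕ → ℕ := fun i => vertexProfile G (i + 1)
  have hn : n ≤ m + c * p m := by
    obtain ⟨j, hj, hjn⟩ := hnbr (m + 1) (v n)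
      ⟨m, m.lt_add_one, (SimpleGraph.dist_eq_one_iff_adj.2 hmn.symm).le⟩
    rw [← hv.1 hjn]
    exact Nat.lt_succ_iff.1 (by simpa [Nat.succ_add] using hj)
  have hdrop : g (v m) - c * M ≤ g (v (m + c * p m)) :=
    hre.antitone.sub_mul_le_apply_add_mul (hmono.comp fun _ _ h => by omega)
      (hre.sub_le_apply_add_vertexProfile G hv hM0 hM) m c
  have hlate : g (v (m + c * p m)) ≤ g (v n) := hre.antitone hn
  linarith

end IsRearrangement

theorem polya_szego_Linf_general {V : Type*} (G : SimpleGraph V)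
    (hmono : Monotone (vertexProfile G))
    (v : ℕ → V) (hv : Function.Bijective v)
    (c : ℕ)
    (hnbr : ∀ N : ℕ, ∀ u : V, (∃ i < N, G.dist u (v i) ≤ 1) →
      u ∈ v '' Set.Iio (N + c * vertexProfile G N))
    (f fstar : V → ℝ) (hsupp : (Function.support f).Finite)
    (hre : IsRearrangement v f fstar) :
    gradLinf G fstar ≤ (c : ℝ) * gradLinf G f := by
  have hrange : (range f).Finite :=
    ((hsupp.image f).insert 0).subset (range_subset_insert_image_support f)
  have hbdd : BddAbove (range fun x => |f x|) := (hrange.image (|·|)).bddAbove.mono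
    (range_subset_iff.2 fun x => mem_image_of_mem _ (mem_range_self x))
  have hM : ∀ x y, G.Adj x y → |f x - f y| ≤ gradLinf G f :=
    fun _ _ => abs_sub_le_gradLinf G hbdd
  have hM0 := gradLinf_nonneg G f
  refine gradLinf_le_of_forall_adj G (by positivity) fun x y hxy => ?_
  obtain ⟨m, rfl⟩ := hv.2 x
  obtain ⟨n, rfl⟩ := hv.2 y
  exact abs_sub_le_iff.2 ⟨hre.sub_le_of_adj G hv hmono hnbr hM0 hM hxy,
    hre.sub_le_of_adj G hv hmono hnbr hM0 hM hxy.symm⟩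

/-- **$L^∞$-Polya-Szegő.** Let `G` be a countably infinite, connected,
locally finite graph with non-decreasing vertex-isoperimetric profile. If the enumeration
`v` satisfies: every vertex within graph distance `1` of `{v₁,…,v_N}` lies in
`{v₁,…,v_{N+c·∂_V(N)}}`, then the associated rearrangement satisfies
`‖∇f*‖_{L^∞} ≤ c·‖∇f‖_{L^∞}`. -/
theorem polya_szego_Linf {V : Type*} (G : SimpleGraph V) (hconn : G.Connected)
    (hloc : ∀ a : V, (G.neighborSet a).Finite)
    (hmono : Monotone (vertexProfile G))
    (v : ℕ → V) (hv : Function.Bijective v)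
    (c : ℕ) (hc : 1 ≤ c)
    (hnbr : ∀ N : ℕ, ∀ u : V, (∃ i < N, G.dist u (v i) ≤ 1) →
      u ∈ v '' Set.Iio (N + c * vertexProfile G N))
    (f fstar : V → ℝ) (hsupp : (Function.support f).Finite) (hpos : ∀ x, 0 ≤ f x)
    (hre : IsRearrangement v f fstar) :
    gradLinf G fstar ≤ (c : ℝ) * gradLinf G f :=
  polya_szego_Linf_general G hmono v hv c hnbr f fstar hsupp hre
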